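/- Every α-endomorphism of A₁(F) of degree 1 has the form f(x) = Ax + By + C, f(y) = Bx + Ay + C with A² - B² = 1, and any such f is an automorphism. -/
import Mathlib


noncomputable section

open scoped BigOperators

/-- Defining relation of the first Weyl algebra: `y*x = x*y + 1`. -/
inductive WeylRel (F : Type) [Field F] :
    FreeAlgebra F (Fin 2) → FreeAlgebra F (Fin 2) → Prop
  | rel : WeylRel F (FreeAlgebra.ι F 1 * FreeAlgebra.ι F 0)
      (FreeAlgebra.ι F 0 * FreeAlgebra.ι F 1 + 1)

/-- The first Weyl algebra `A₁(F)`. -/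
abbrev Weyl (F : Type) [Field F] : Type := RingQuot (WeylRel F)

/-- The generator `x` of `A₁(F)`. -/
def Wx (F : Type) [Field F] : Weyl F :=
  RingQuot.mkAlgHom F (WeylRel F) (FreeAlgebra.ι F 0)

/-- The generator `y` of `A₁(F)`. -/
def Wy (F : Type) [Field F] : Weyl F :=
  RingQuot.mkAlgHom F (WeylRel F) (FreeAlgebra.ι F 1)

/-- The `F`-span of the monomials `x^i * y^j` with `i + j ≤ n` (the (1,1)-filtration). -/
def WFil (F : Type) [Field F] (n : ℕ) : Submodule F (Weyl F) :=
  Submodule.span F {w : Weyl F | ∃ i j : ℕ, i + j ≤ n ∧ w = Wx F ^ i * Wy F ^ j}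

section WeylAux

variable (F : Type) [Field F]

/-- multiplication by X -/
def WM : Module.End F (Polynomial F) := LinearMap.mulLeft F Polynomial.X

/-- derivative -/
def WD : Module.End F (Polynomial F) := Polynomial.derivative

lemma weyl_rel_end : ∀ ⦃a b⦄, WeylRel F a b →
    (FreeAlgebra.lift F ![WM F, WD F]) a = (FreeAlgebra.lift F ![WM F, WD F]) b := by
  intro a b h
  cases h
  simp only [map_mul, map_add, map_one, FreeAlgebra.lift_ι_apply,
    Matrix.cons_val_zero, Matrix.cons_val_one, Matrix.head_cons]
  refine LinearMap.ext fun p => ?_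
  simp only [WM, WD, Module.End.mul_apply, LinearMap.add_apply, Module.End.one_apply,
    LinearMap.mulLeft_apply, Polynomial.derivative_mul, Polynomial.derivative_X]
  ring

def Wρ : Weyl F →ₐ[F] Module.End F (Polynomial F) :=
  RingQuot.liftAlgHom F ⟨FreeAlgebra.lift F ![WM F, WD F], weyl_rel_end F⟩

lemma Wρ_x : Wρ F (Wx F) = WM F := by
  simp [Wρ, Wx, RingQuot.liftAlgHom_mkAlgHom_apply]

lemma Wρ_y : Wρ F (Wy F) = WD F := by
  simp [Wρ, Wy, RingQuot.liftAlgHom_mkAlgHom_apply]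

lemma weyl_indep (A B C : F) (h : A • Wx F + B • Wy F + C • (1 : Weyl F) = 0) :
    A = 0 ∧ B = 0 ∧ C = 0 := by
  have h' := congrArg (Wρ F) h
  rw [map_add, map_add, map_smul, map_smul, map_smul, map_one, map_zero, Wρ_x, Wρ_y] at h'
  have h1 := congrArg (fun e : Module.End F (Polynomial F) => e 1) h'
  have hX := congrArg (fun e : Module.End F (Polynomial F) => e Polynomial.X) h'
  simp only [LinearMap.add_apply, LinearMap.smul_apply, Module.End.one_apply,
    LinearMap.zero_apply, WM, WD, LinearMap.mulLeft_apply] at h1 hX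
  simp only [mul_one, map_one, Polynomial.derivative_one, smul_zero, add_zero,
    Polynomial.derivative_X] at h1 hX
  have hA := congrArg (fun p : Polynomial F => p.coeff 1) h1
  have hC := congrArg (fun p : Polynomial F => p.coeff 0) h1
  have hB := congrArg (fun p : Polynomial F => p.coeff 0) hX
  simp only [Polynomial.coeff_add, Polynomial.coeff_smul, Polynomial.coeff_one,
    Polynomial.coeff_X_zero, Polynomial.coeff_X_one, Polynomial.coeff_zero, smul_eq_mul,
    Polynomial.coeff_X_mul, mul_one, mul_zero, zero_add, add_zero] at hA hC hB
  rw [Polynomial.coeff_zero_eq_eval_zero] at hB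
  simp only [if_true, if_neg one_ne_zero, mul_zero, add_zero, mul_one, Polynomial.eval_mul,
    Polynomial.eval_X, zero_mul, mul_zero] at hA hC hB
  exact ⟨hA, by simpa using hB, hC⟩

lemma weyl_comm : Wy F * Wx F = Wx F * Wy F + 1 := by
  have := RingQuot.mkAlgHom_rel F (WeylRel.rel (F := F))
  simpa [Wx, Wy, map_mul, map_add, map_one] using this

lemma weyl_key {W : Type} [Ring W] [Algebra F W] (X Y : W) (h : Y * X = X * Y + 1)
    (A B C A' B' C' : F) :
    (A' • X + B' • Y + C' • (1 : W)) * (A • X + B • Y + C • 1)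
      = (A • X + B • Y + C • 1) * (A' • X + B' • Y + C' • 1) + (A * B' - B * A') • 1 := by
  simp only [add_mul, mul_add, smul_mul_assoc, mul_smul_comm, smul_smul, h, mul_one, one_mul,
    smul_add]
  module

lemma weyl_hom_ext {W : Type} [Semiring W] [Algebra F W] (g h : Weyl F →ₐ[F] W)
    (hx : g (Wx F) = h (Wx F)) (hy : g (Wy F) = h (Wy F)) : g = h := by
  apply RingQuot.ringQuot_ext'
  apply FreeAlgebra.hom_ext
  funext i
  fin_cases i
  · simpa [Wx] using hx
  · simpa [Wy] using hy


end WeylAux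

/-- Every α-endomorphism of degree 1 has the form
`f(x) = Ax + By + C`, `f(y) = Bx + Ay + C` with `A² - B² = 1`, and is an automorphism. -/
theorem degree_one_alpha_endo (F : Type) [Field F] [CharZero F]
    (α : Weyl F →ₗ[F] Weyl F)
    (hαanti : ∀ a b : Weyl F, α (a * b) = α b * α a)
    (hα2 : ∀ w : Weyl F, α (α w) = w)
    (hαx : α (Wx F) = Wy F) (hαy : α (Wy F) = Wx F)
    (f : Weyl F →ₐ[F] Weyl F) (hf : ∀ w : Weyl F, f (α w) = α (f w))
    (hdeg1 : f (Wx F) ∈ WFil F 1) (hdeg0 : f (Wx F) ∉ WFil F 0) :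
    ∃ A B C : F,
      f (Wx F) = A • Wx F + B • Wy F + algebraMap F (Weyl F) C ∧
      f (Wy F) = B • Wx F + A • Wy F + algebraMap F (Weyl F) C ∧
      A ^ 2 - B ^ 2 = 1 ∧ Function.Bijective f := by
  have hdeg1 : f (Wx F) ∈ Submodule.span F
      {w : Weyl F | ∃ i j : ℕ, i + j ≤ 1 ∧ w = Wx F ^ i * Wy F ^ j} := hdeg1

  -- Step 1: extract coefficients A B C with f x = A•x + B•y + C•1
  have hsub : {w : Weyl F | ∃ i j : ℕ, i + j ≤ 1 ∧ w = Wx F ^ i * Wy F ^ j}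
      ⊆ ({1, Wx F, Wy F} : Set (Weyl F)) := by
    rintro w ⟨i, j, hij, rfl⟩
    have hi : i ≤ 1 := le_trans (Nat.le_add_right _ _) hij
    have hj : j ≤ 1 := le_trans (Nat.le_add_left _ _) hij
    interval_cases i <;> interval_cases j <;> first | (exfalso; omega) | simp
  have hmem : f (Wx F) ∈ Submodule.span F ({1, Wx F, Wy F} : Set (Weyl F)) :=
    Submodule.span_mono hsub hdeg1
  rw [Submodule.mem_span_insert] at hmem
  obtain ⟨C, z, hz, hzz⟩ := hmem
  rw [Submodule.mem_span_insert] at hz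
  obtain ⟨A, z', hz', hz'z⟩ := hz
  rw [Submodule.mem_span_singleton] at hz'
  obtain ⟨B, rfl⟩ := hz'
  have hfx : f (Wx F) = A • Wx F + B • Wy F + C • (1 : Weyl F) := by
    rw [hzz, hz'z]; module
  -- α fixes 1 and scalars
  have hα1 : α 1 = (1 : Weyl F) := by
    have h1 : α (α (1 : Weyl F)) = 1 := hα2 1
    have h2 : α (α (1 : Weyl F) * 1) = α 1 * α (α 1) := hαanti _ _
    rw [mul_one, h1, mul_one] at h2
    exact h2.symm
  -- f y
  have hfy : f (Wy F) = B • Wx F + A • Wy F + C • (1 : Weyl F) := by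
    have : f (Wy F) = α (f (Wx F)) := by rw [← hf, hαx]
    rw [hfx, map_add, map_add, map_smul, map_smul, map_smul, hαx, hαy, hα1] at this
    rw [this]; module
  -- A² - B² = 1
  have hrel : f (Wy F) * f (Wx F) = f (Wx F) * f (Wy F) + 1 := by
    rw [← map_mul, ← map_mul, weyl_comm, map_add, map_one]
  have hkey := weyl_key F (Wx F) (Wy F) (weyl_comm F) A B C B A C
  rw [hfx, hfy] at hrel
  rw [hrel] at hkey
  have h1' : (1 : Weyl F) = (A * A - B * B) • 1 := add_left_cancel hkey
  have hzero : (0:F) • Wx F + (0:F) • Wy F + (A * A - B * B - 1) • (1 : Weyl F) = 0 := by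
    have h2 : (A * A - B * B - 1) • (1 : Weyl F)
        = (A * A - B * B) • (1 : Weyl F) - (1:F) • (1 : Weyl F) := by module
    rw [zero_smul, zero_smul, zero_add, zero_add, h2, ← h1', one_smul, sub_self]
  have hABC := weyl_indep F 0 0 (A * A - B * B - 1) hzero
  have hA : A ^ 2 - B ^ 2 = 1 := by linear_combination hABC.2.2
  -- construct the inverse g
  set c : F := (B - A) * C with hc
  have hgrel : ∀ ⦃a b⦄, WeylRel F a b →
      (FreeAlgebra.lift F ![A • Wx F + (-B) • Wy F + c • 1,
        (-B) • Wx F + A • Wy F + c • 1]) a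
      = (FreeAlgebra.lift F ![A • Wx F + (-B) • Wy F + c • 1,
        (-B) • Wx F + A • Wy F + c • 1]) b := by
    intro a b h
    cases h
    simp only [map_mul, map_add, map_one, FreeAlgebra.lift_ι_apply,
      Matrix.cons_val_zero, Matrix.cons_val_one, Matrix.head_cons]
    have := weyl_key F (Wx F) (Wy F) (weyl_comm F) A (-B) c (-B) A c
    rw [this]
    congr 1
    rw [show A * A - -B * -B = (1:F) by linear_combination hA, one_smul]
  set g : Weyl F →ₐ[F] Weyl F :=
    RingQuot.liftAlgHom F ⟨FreeAlgebra.lift F ![A • Wx F + (-B) • Wy F + c • 1,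
        (-B) • Wx F + A • Wy F + c • 1], hgrel⟩ with hgdef
  have hgx : g (Wx F) = A • Wx F + (-B) • Wy F + c • (1 : Weyl F) := by
    rw [hgdef]
    show (RingQuot.liftAlgHom F _) (RingQuot.mkAlgHom F (WeylRel F) (FreeAlgebra.ι F 0)) = _
    rw [RingQuot.liftAlgHom_mkAlgHom_apply, FreeAlgebra.lift_ι_apply]
    simp
  have hgy : g (Wy F) = (-B) • Wx F + A • Wy F + c • (1 : Weyl F) := by
    rw [hgdef]
    show (RingQuot.liftAlgHom F _) (RingQuot.mkAlgHom F (WeylRel F) (FreeAlgebra.ι F 1)) = _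
    rw [RingQuot.liftAlgHom_mkAlgHom_apply, FreeAlgebra.lift_ι_apply]
    simp
  have hfg : f.comp g = AlgHom.id F (Weyl F) := by
    apply weyl_hom_ext
    · rw [AlgHom.comp_apply, hgx, AlgHom.id_apply, map_add, map_add, map_smul, map_smul,
        map_smul, map_one, hfx, hfy]
      rw [hc]
      match_scalars <;> (first | ring1 | linear_combination hA | linear_combination (-C) * hA | linear_combination C * hA)
    · rw [AlgHom.comp_apply, hgy, AlgHom.id_apply, map_add, map_add, map_smul, map_smul,
        map_smul, map_one, hfx, hfy]
      rw [hc]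
      match_scalars <;> (first | ring1 | linear_combination hA | linear_combination (-C) * hA | linear_combination C * hA)
  have hgf : g.comp f = AlgHom.id F (Weyl F) := by
    apply weyl_hom_ext
    · rw [AlgHom.comp_apply, hfx, AlgHom.id_apply, map_add, map_add, map_smul, map_smul,
        map_smul, map_one, hgx, hgy]
      rw [hc]
      match_scalars <;> (first | ring1 | linear_combination hA | linear_combination (-C) * hA | linear_combination C * hA)
    · rw [AlgHom.comp_apply, hfy, AlgHom.id_apply, map_add, map_add, map_smul, map_smul,
        map_smul, map_one, hgx, hgy]
      rw [hc]
      match_scalars <;> (first | ring1 | linear_combination hA | linear_combination (-C) * hA | linear_combination C * hA)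
  refine ⟨A, B, C, ?_, ?_, hA, ?_⟩
  · rw [hfx, Algebra.algebraMap_eq_smul_one]
  · rw [hfy, Algebra.algebraMap_eq_smul_one]
  · exact Function.bijective_iff_has_inverse.mpr
      ⟨g, fun w => AlgHom.congr_fun hgf w, fun w => AlgHom.congr_fun hfg w⟩
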